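/- If ‖·‖ is a unitarily invariant L-norm on M_n(ℂ), then ‖·‖ = α‖·‖₁ for some α > 0, where ‖·‖₁ is the trace norm. -/

import Mathlib

open Matrix BigOperators ComplexOrder

/-- Square complex matrices. -/
abbrev Mat (n : ℕ) := Matrix (Fin n) (Fin n) ℂ

/-- `N` is a norm on `Mat n`. -/
def IsMatrixNorm {n : ℕ} (N : Mat n → ℝ) : Prop :=
  (∀ A, N A = 0 ↔ A = 0) ∧
  (∀ (c : ℂ) (A : Mat n), N (c • A) = ‖c‖ * N A) ∧
  (∀ A B : Mat n, N (A + B) ≤ N A + N B)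

/-- A set of matrices is C*-convex. -/
def CStarConvex {n : ℕ} (K : Set (Mat n)) : Prop :=
  ∀ (k : ℕ) (C A : Fin k → Mat n), (∀ i, A i ∈ K) →
    (∑ i, (C i)ᴴ * C i = 1) → (∑ i, (C i)ᴴ * A i * C i) ∈ K

/-- `N` is an M-norm. -/
def IsMNorm {n : ℕ} (N : Mat n → ℝ) : Prop :=
  ∀ (k : ℕ) (C X : Fin k → Mat n), (∑ i, (C i)ᴴ * C i = 1) →
    N (∑ i, (C i)ᴴ * X i * C i) ≤ ⨆ i, N (X i)

/-- `N` is an L-norm. -/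
def IsLNorm {n : ℕ} (N : Mat n → ℝ) : Prop :=
  ∀ (k : ℕ) (C : Fin k → Mat n) (X : Mat n), (∑ i, (C i)ᴴ * C i = 1) →
    ∑ i, N (C i * X * (C i)ᴴ) ≤ N X

/-- The dual norm with respect to the pairing `⟨Y|X⟩ = Tr(Yᴴ X)`. -/
noncomputable def dualNorm {n : ℕ} (N : Mat n → ℝ) (Y : Mat n) : ℝ :=
  sSup {r | ∃ X : Mat n, N X ≤ 1 ∧ r = ‖(Yᴴ * X).trace‖}

/-- The operator (spectral) norm of a matrix. -/
noncomputable def opNorm {n : ℕ} (A : Mat n) : ℝ :=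
  ‖Matrix.toEuclideanCLM (𝕜 := ℂ) (n := Fin n) A‖

/-- The trace norm `‖A‖₁ = Tr((AᴴA)^{1/2})`. -/
noncomputable def traceNorm {n : ℕ} (A : Mat n) : ℝ :=
  ((Matrix.posSemidef_conjTranspose_mul_self A).1.eigenvectorUnitary.1 *
    diagonal (fun i => ((Real.sqrt ((Matrix.posSemidef_conjTranspose_mul_self A).1.eigenvalues i) : ℝ) : ℂ)) *
    (star (Matrix.posSemidef_conjTranspose_mul_self A).1.eigenvectorUnitary : Mat n)).trace.re

/-- The numerical radius. -/
noncomputable def numRadius {n : ℕ} (A : Mat n) : ℝ :=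
  sSup {r | ∃ x : EuclideanSpace ℂ (Fin n), ‖x‖ = 1 ∧
    r = ‖(inner ℂ x (Matrix.toEuclideanCLM (𝕜 := ℂ) (n := Fin n) A x) : ℂ)‖}

/-!
Permutation matrices are unitary, so all diagonal matrix units `Eᵢᵢ` have the same norm `α > 0`.
For a diagonal `D`, the triangle inequality gives `N D ≤ α ∑ |dᵢ|`, while the L-norm inequality
for the pinching `Cᵢ = Eᵢᵢ` (for which `Cᵢ D Cᵢᴴ = dᵢ Eᵢᵢ`) gives the reverse. A singular value
decomposition `A = W D Vᴴ` and unitary invariance then give `N A = α ∑ sᵢ(A) = α ‖A‖₁`.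
-/

theorem Matrix.exists_unitary_mul_diagonal_eq_of_conjTranspose_mul_self_eq {m 𝕜 : Type*}
    [Fintype m] [DecidableEq m] [RCLike 𝕜] (B : Matrix m m 𝕜) (d : m → 𝕜)
    (hB : Bᴴ * B = diagonal fun i => star (d i) * d i) :
    ∃ W ∈ unitaryGroup m 𝕜, B = W * diagonal d := by
  have hgram : ∀ i j, star (Bᵀ i) ⬝ᵥ Bᵀ j = if i = j then star (d i) * d i else 0 := by
    intro i j
    simpa [mul_apply, dotProduct, diagonal_apply] using congrFun (congrFun hB i) j
  -- The nonzero columns of `B`, normalized, extend to an orthonormal basis: the columns of `W`.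
  set v : m → EuclideanSpace 𝕜 m := fun i => WithLp.toLp 2 ((d i)⁻¹ • Bᵀ i)
  have hv : Orthonormal 𝕜 (({i | d i ≠ 0} : Set m).domRestrict v) := by
    rw [orthonormal_iff_ite]
    rintro ⟨i, hi⟩ ⟨j, hj⟩
    simp only [Set.domRestrict_apply, v, EuclideanSpace.inner_toLp_toLp, Subtype.mk.injEq]
    rw [dotProduct_comm, star_smul, smul_dotProduct, dotProduct_smul, hgram]
    split_ifs with h
    · subst h
      have hi : d i ≠ 0 := hi
      have hi' : star (d i) ≠ 0 := star_ne_zero.2 hi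
      simp only [smul_eq_mul, star_inv₀]
      field_simp
    · simp
  obtain ⟨b, hb⟩ := hv.exists_orthonormalBasis_extension_of_card_eq (by simp)
  refine ⟨(EuclideanSpace.basisFun m 𝕜).toBasis.toMatrix b.toBasis,
    (EuclideanSpace.basisFun m 𝕜).toMatrix_orthonormalBasis_mem_unitary b, ?_⟩
  ext a i
  rw [mul_diagonal, Module.Basis.toMatrix_apply]
  by_cases hi : d i = 0
  · have : Bᵀ i = 0 := dotProduct_star_self_eq_zero.1 (by simp [hgram, hi])
    simpa [hi] using congrFun this a
  · simp [hb i hi, v, mul_right_comm _ (B a i), hi]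

theorem Matrix.exists_svd {m 𝕜 : Type*} [Fintype m] [DecidableEq m] [RCLike 𝕜]
    (A : Matrix m m 𝕜) (hA : (Aᴴ * A).IsHermitian) :
    ∃ W ∈ unitaryGroup m 𝕜, A = W * diagonal (fun i => (√(hA.eigenvalues i) : 𝕜)) *
      star (hA.eigenvectorUnitary : Matrix m m 𝕜) := by
  set V : Matrix m m 𝕜 := (hA.eigenvectorUnitary : Matrix m m 𝕜)
  have hAV : (A * V)ᴴ * (A * V) =
      diagonal fun i => star (√(hA.eigenvalues i) : 𝕜) * √(hA.eigenvalues i) := by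
    have hdiag : star V * (Aᴴ * A) * V = diagonal (RCLike.ofReal ∘ hA.eigenvalues) := by
      simpa [Unitary.conjStarAlgAut_apply] using hA.conjStarAlgAut_star_eigenvectorUnitary
    rw [conjTranspose_mul, ← star_eq_conjTranspose]
    simp only [mul_assoc] at hdiag ⊢
    rw [hdiag]
    congr 1
    ext i
    -- by proof irrelevance these are the eigenvalues taken with respect to `hA`
    have hμ := (posSemidef_conjTranspose_mul_self A).eigenvalues_nonneg i
    simp [← RCLike.ofReal_mul, Real.mul_self_sqrt hμ]
  obtain ⟨W, hW, hB⟩ :=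
    exists_unitary_mul_diagonal_eq_of_conjTranspose_mul_self_eq (A * V) _ hAV
  refine ⟨W, hW, ?_⟩
  rw [← hB, mul_assoc, Unitary.mul_star_self_of_mem hA.eigenvectorUnitary.2, mul_one]

theorem traceNorm_eq_sum_sqrt_eigenvalues {n : ℕ} (A : Mat n) :
    traceNorm A = ∑ i, √((posSemidef_conjTranspose_mul_self A).1.eigenvalues i) := by
  rw [traceNorm, trace_mul_cycle, Unitary.star_mul_self_of_mem (Subtype.prop _), one_mul,
    trace_diagonal, Complex.re_sum]
  simp only [Complex.ofReal_re]

def UnitarilyInvariant {n : ℕ} (N : Mat n → ℝ) : Prop :=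
  ∀ (A U V : Mat n), Uᴴ * U = 1 → U * Uᴴ = 1 → Vᴴ * V = 1 → V * Vᴴ = 1 → N (U * A * V) = N A

namespace IsMatrixNorm

variable {n : ℕ} {N : Mat n → ℝ}

theorem map_zero (hN : IsMatrixNorm N) : N 0 = 0 := (hN.1 0).2 rfl

theorem nonneg (hN : IsMatrixNorm N) (A : Mat n) : 0 ≤ N A := by
  have h := hN.2.2 A (-A)
  rw [add_neg_cancel, hN.map_zero, ← neg_one_smul ℂ A, hN.2.1] at h
  simp only [norm_neg, norm_one, one_mul] at h
  linarith

theorem apply_sum_le (hN : IsMatrixNorm N) {ι : Type*} (s : Finset ι) (f : ι → Mat n) :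
    N (∑ i ∈ s, f i) ≤ ∑ i ∈ s, N (f i) :=
  Finset.le_sum_of_subadditive N hN.map_zero.le hN.2.2 s f

end IsMatrixNorm

namespace UnitarilyInvariant

variable {n : ℕ} {N : Mat n → ℝ}

theorem apply_mul_mul (hU : UnitarilyInvariant N) {U V : Mat n}
    (hU' : U ∈ unitaryGroup (Fin n) ℂ) (hV : V ∈ unitaryGroup (Fin n) ℂ) (A : Mat n) :
    N (U * A * V) = N A :=
  hU A U V (mem_unitaryGroup_iff'.1 hU') (mem_unitaryGroup_iff.1 hU')
    (mem_unitaryGroup_iff'.1 hV) (mem_unitaryGroup_iff.1 hV)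

theorem apply_single_one_eq (hU : UnitarilyInvariant N) (i j : Fin n) :
    N (single i i 1) = N (single j j 1) := by
  set P := (Equiv.swap i j).permMatrix ℂ
  have hP : P ∈ unitaryGroup (Fin n) ℂ :=
    mem_unitaryGroup_iff'.2 (by simp [P, star_eq_conjTranspose, ← permMatrix_mul])
  have hconj : P * single j j 1 * star P = single i i 1 := by
    simp [P, star_eq_conjTranspose, PEquiv.toMatrix_toPEquiv_mul, PEquiv.mul_toMatrix_toPEquiv]
  rw [← hconj, hU.apply_mul_mul hP (Unitary.star_mem hP)]

end UnitarilyInvariant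

theorem IsLNorm.apply_diagonal {n : ℕ} {N : Mat n → ℝ} (hN : IsMatrixNorm N) (hL : IsLNorm N)
    (hU : UnitarilyInvariant N) (d : Fin n → ℂ) (j : Fin n) :
    N (diagonal d) = (∑ i, ‖d i‖) * N (single j j 1) := by
  have hsingle : ∀ i, N (single i i (d i)) = ‖d i‖ * N (single j j 1) := fun i => by
    rw [← hU.apply_single_one_eq i j, ← hN.2.1, smul_single, smul_eq_mul, mul_one]
  apply le_antisymm
  · calc N (diagonal d) = N (∑ i, single i i (d i)) := by rw [sum_single_eq_diagonal]
      _ ≤ ∑ i, N (single i i (d i)) := hN.apply_sum_le _ _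
      _ = (∑ i, ‖d i‖) * N (single j j 1) := by simp only [hsingle, Finset.sum_mul]
  · have hC : ∑ i : Fin n, (single i i (1 : ℂ))ᴴ * single i i 1 = 1 := by
      simp [sum_single_one]
    calc (∑ i, ‖d i‖) * N (single j j 1)
          = ∑ i, N (single i i 1 * diagonal d * (single i i 1)ᴴ) := by
            simp [hsingle, Finset.sum_mul]
      _ ≤ N (diagonal d) := hL n _ _ hC

theorem unitarilyInvariant_LNorm_eq_traceNorm {n : ℕ} (N : Mat n → ℝ)
    (hN : IsMatrixNorm N) (hL : IsLNorm N)
    (hui : ∀ (A U V : Mat n), Uᴴ * U = 1 → U * Uᴴ = 1 → Vᴴ * V = 1 → V * Vᴴ = 1 →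
      N (U * A * V) = N A) :
    ∃ α : ℝ, 0 < α ∧ ∀ A : Mat n, N A = α * traceNorm A := by
  have hU : UnitarilyInvariant N := hui
  rcases isEmpty_or_nonempty (Fin n) with hn | ⟨⟨j⟩⟩
  · refine ⟨1, one_pos, fun A => ?_⟩
    rw [Subsingleton.elim A 0, hN.map_zero, traceNorm_eq_sum_sqrt_eigenvalues,
      Finset.univ_eq_empty, Finset.sum_empty, mul_zero]
  have hE : single j j (1 : ℂ) ≠ 0 := fun h => by simpa using congr_fun₂ h j j
  refine ⟨N (single j j 1), (hN.nonneg _).lt_of_ne fun h => hE ((hN.1 _).1 h.symm), fun A => ?_⟩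
  set μ := (posSemidef_conjTranspose_mul_self A).1.eigenvalues
  obtain ⟨W, hW, hA⟩ := exists_svd A (posSemidef_conjTranspose_mul_self A).1
  calc N A = N (diagonal fun i => (√(μ i) : ℂ)) :=
        (congrArg N hA).trans (hU.apply_mul_mul hW (Unitary.star_mem (Subtype.prop _)) _)
    _ = (∑ i, √(μ i)) * N (single j j 1) := by
        rw [hL.apply_diagonal hN hU _ j]
        simp [abs_of_nonneg (Real.sqrt_nonneg _)]
    _ = N (single j j 1) * traceNorm A := by rw [traceNorm_eq_sum_sqrt_eigenvalues, mul_comm]
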